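/- For any integers r ≥ 0, s ≥ 0 with n = r + s > 0, the complexified Lie algebras 𝔊_{r,s} ⊗_ℝ ℂ and 𝔊_{n,0} ⊗_ℝ ℂ are isomorphic as complex Lie algebras. -/

import Mathlib

/-
Setting (Eberlein, "Isometries of Clifford Algebras II"):
`F` a field with `char F ≠ 2`, `n = r + s > 0`, and `Cl(r,s)` the Clifford algebra of `F^n`
in which `eᵢ·eⱼ = -eⱼ·eᵢ` for `i ≠ j`, `eᵢ² = -1` for the first `r` indices and
`eᵢ² = +1` for the last `s` indices.
-/

open CliffordAlgebra

namespace CliffPaper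

attribute [local instance 100] LieRing.ofAssociativeRing

/-- The quadratic form `q(x) = -x₁² - … - x_r² + x_{r+1}² + … + x_n²` on `F^(r+s)`. -/
noncomputable def Qf (F : Type*) [Field F] (r s : ℕ) : QuadraticForm F (Fin (r + s) → F) :=
  QuadraticMap.weightedSumSquares F (fun i : Fin (r + s) => if (i : ℕ) < r then (-1 : F) else 1)

/-- The Clifford algebra `Cl(r,s)`. -/
abbrev Cl (F : Type*) [Field F] (r s : ℕ) : Type _ := CliffordAlgebra (Qf F r s)

/-- The generator `e_i` of `Cl(r,s)` (`i` is a zero-based index, so `e_i² = -1` for `i < r`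
and `e_i² = +1` for `r ≤ i`). -/
noncomputable def gen (F : Type*) [Field F] (r s : ℕ) (i : Fin (r + s)) : Cl F r s :=
  ι (Qf F r s) (Pi.single i 1)

/-- For a multi-index `I = {i₁ < … < i_k}`, the product `e_I = e_{i₁} ⋯ e_{i_k}`. -/
noncomputable def eProd (F : Type*) [Field F] (r s : ℕ) (I : Finset (Fin (r + s))) : Cl F r s :=
  ((I.sort (· ≤ ·)).map (gen F r s)).prod

/-- Clifford conjugation: the unique anti-automorphism `c` of `Cl(r,s)` with `c ∘ c = id` and
`c(v) = -v` for all `v ∈ F^n`; concretely, reversal composed with the grade involution. -/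
noncomputable def conj (F : Type*) [Field F] (r s : ℕ) : Cl F r s →ₗ[F] Cl F r s :=
  (reverse (Q := Qf F r s)).comp (involute (Q := Qf F r s)).toLinearMap

theorem conj_mul (F : Type*) [Field F] (r s : ℕ) (a b : Cl F r s) :
    conj F r s (a * b) = conj F r s b * conj F r s a := by
  simp [conj, reverse.map_mul]

/-- `𝔊_{r,s} = {x ∈ Cl(r,s) : c(x) = -x}`, the `-1`-eigenspace of Clifford conjugation,
as an `F`-subspace of `Cl(r,s)`. -/
noncomputable def Gsub (F : Type*) [Field F] (r s : ℕ) : Submodule F (Cl F r s) :=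
  LinearMap.ker (conj F r s + LinearMap.id)

theorem mem_Gsub {F : Type*} [Field F] {r s : ℕ} (x : Cl F r s) :
    x ∈ Gsub F r s ↔ conj F r s x = -x := by
  simp [Gsub, LinearMap.mem_ker, add_eq_zero_iff_eq_neg]

/-- `𝔊_{r,s}` as a Lie subalgebra of `Cl(r,s)` with the commutator bracket
`⁅x,y⁆ = x*y - y*x`. -/
noncomputable def GLie (F : Type*) [Field F] (r s : ℕ) : LieSubalgebra F (Cl F r s) where
  toSubmodule := Gsub F r s
  lie_mem' := by
    intro x y hx hy
    have hx' : x ∈ Gsub F r s := hx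
    have hy' : y ∈ Gsub F r s := hy
    show ⁅x, y⁆ ∈ Gsub F r s
    rw [mem_Gsub] at hx' hy' ⊢
    rw [Ring.lie_def, map_sub, conj_mul, conj_mul, hx', hy']
    noncomm_ring

/-- `𝔎_{r,s}`: the `+1`-eigenspace of `β` restricted to `𝔊_{r,s}`. -/
noncomputable def Ksub (F : Type*) [Field F] (r s : ℕ) (β : Cl F r s ≃ₐ[F] Cl F r s) :
    Submodule F (Cl F r s) :=
  LinearMap.ker (β.toLinearMap - LinearMap.id) ⊓ Gsub F r s

/-- `𝔓_{r,s}`: the `-1`-eigenspace of `β` restricted to `𝔊_{r,s}`. -/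
noncomputable def Psub (F : Type*) [Field F] (r s : ℕ) (β : Cl F r s ≃ₐ[F] Cl F r s) :
    Submodule F (Cl F r s) :=
  LinearMap.ker (β.toLinearMap + LinearMap.id) ⊓ Gsub F r s

/-- The center `𝔷(𝔎_{r,s}) = {x ∈ 𝔎_{r,s} : [x,y] = 0 for all y ∈ 𝔎_{r,s}}`. -/
noncomputable def ZKsub (F : Type*) [Field F] (r s : ℕ) (β : Cl F r s ≃ₐ[F] Cl F r s) :
    Submodule F (Cl F r s) where
  carrier := {x | x ∈ Ksub F r s β ∧ ∀ y ∈ Ksub F r s β, x * y = y * x}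
  zero_mem' := ⟨zero_mem _, fun y _ => by simp⟩
  add_mem' := fun {a b} ha hb => ⟨add_mem ha.1 hb.1, fun y hy => by
    rw [add_mul, mul_add, ha.2 y hy, hb.2 y hy]⟩
  smul_mem' := fun c a ha => ⟨Submodule.smul_mem _ c ha.1, fun y hy => by
    rw [smul_mul_assoc, mul_smul_comm, ha.2 y hy]⟩

/-- `𝔥_{r,s}`: the span of the `e_I` with `|I| ≡ 1, 2 (mod 4)` and `I ≠ {1,…,n}`. -/
noncomputable def Hsub (F : Type*) [Field F] (r s : ℕ) : Submodule F (Cl F r s) :=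
  Submodule.span F {x | ∃ I : Finset (Fin (r + s)), I.Nonempty ∧ I ≠ Finset.univ ∧
    (I.card % 4 = 1 ∨ I.card % 4 = 2) ∧ x = eProd F r s I}

/-- The volume element `ω = e₁e₂⋯e_n`. -/
noncomputable def omegaEl (F : Type*) [Field F] (r s : ℕ) : Cl F r s :=
  eProd F r s Finset.univ

end CliffPaper

/-!
Over `ℂ` the forms of signatures `(r, s)` and `(r + s, 0)` both become the sum of squares, so
an isometry between them gives an isomorphism of the complexified Clifford algebras. Being
induced by a map of generating spaces, it commutes with reversion and the grade involution, hence
with Clifford conjugation, and so carries one complexified `-1`-eigenspace onto the other. Since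
`ℂ` is flat over `ℝ`, that eigenspace is exactly `ℂ ⊗ 𝔊`, and an algebra isomorphism preserves
commutators.
-/

open TensorProduct LinearMap QuadraticMap

section BaseChange

variable {R S : Type*} [CommRing R] [CommRing S] [Algebra R S] [Module.Flat R S]

variable (S) in
theorem Submodule.baseChange_subtype_injective {M : Type*} [AddCommGroup M] [Module R M]
    (p : Submodule R M) : Function.Injective (p.subtype.baseChange S) := by
  rw [baseChange_eq_ltensor]
  exact Module.Flat.lTensor_preserves_injective_linearMap _ p.injective_subtype

theorem Submodule.baseChange_ker {M N : Type*} [AddCommGroup M] [Module R M] [AddCommGroup N]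
    [Module R N] (f : M →ₗ[R] N) : (ker f).baseChange S = ker (f.baseChange S) :=
  (Module.Flat.ker_lTensor_eq S S f).symm

end BaseChange

theorem LinearEquiv.map_ker_of_comm {R M N : Type*} [Semiring R] [AddCommMonoid M] [Module R M]
    [AddCommMonoid N] [Module R N] (Φ : M ≃ₗ[R] N) {f : M →ₗ[R] M} {g : N →ₗ[R] N}
    (h : ∀ x, Φ (f x) = g (Φ x)) : (ker f).map (Φ : M →ₗ[R] N) = ker g := by
  ext y
  rw [Submodule.map_equiv_eq_comap_symm, Submodule.mem_comap, mem_ker, mem_ker,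
    ← Φ.map_eq_zero_iff, LinearEquiv.coe_coe, h, Φ.apply_symm_apply]

section LieBaseChange

attribute [local instance 100] LieRing.ofAssociativeRing

variable {R S A B : Type*} [CommRing R] [CommRing S] [Algebra R S]
  [Ring A] [Algebra R A] [Ring B] [Algebra R B]

theorem LieSubalgebra.baseChange_subtype_lie (L : LieSubalgebra R A) (x y : S ⊗[R] L) :
    L.toSubmodule.subtype.baseChange S ⁅x, y⁆ =
      L.toSubmodule.subtype.baseChange S x * L.toSubmodule.subtype.baseChange S y -
      L.toSubmodule.subtype.baseChange S y * L.toSubmodule.subtype.baseChange S x := by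
  -- `rw` only finds the bracket of `S ⊗[R] L` when its Lie instances are named explicitly
  induction x using TensorProduct.induction_on with
  | zero => rw [zero_lie (L := S ⊗[R] L) (M := S ⊗[R] L)]; simp
  | add a b ha hb =>
    rw [add_lie (L := S ⊗[R] L) (M := S ⊗[R] L), map_add, ha, hb, map_add]; noncomm_ring
  | tmul z a =>
    induction y using TensorProduct.induction_on with
    | zero => rw [lie_zero (L := S ⊗[R] L) (M := S ⊗[R] L)]; simp
    | add c d hc hd =>
      rw [lie_add (L := S ⊗[R] L) (M := S ⊗[R] L), map_add, hc, hd, map_add]; noncomm_ring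
    | tmul w b => simp [LieSubalgebra.coe_bracket, Ring.lie_def, tmul_sub, mul_comm w z]

variable [Module.Flat R S]

noncomputable def LieEquiv.ofAlgEquivBaseChange (L : LieSubalgebra R A) (M : LieSubalgebra R B)
    (Φ : S ⊗[R] A ≃ₐ[S] S ⊗[R] B)
    (h : (L.toSubmodule.baseChange S).map Φ.toLinearMap = M.toSubmodule.baseChange S) :
    S ⊗[R] L ≃ₗ⁅S⁆ S ⊗[R] M :=
  let e : S ⊗[R] L ≃ₗ[S] S ⊗[R] M :=
    LinearEquiv.ofInjective _ (L.toSubmodule.baseChange_subtype_injective S) ≪≫ₗ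
      Φ.toLinearEquiv.ofSubmodules _ _ h ≪≫ₗ
      (LinearEquiv.ofInjective _ (M.toSubmodule.baseChange_subtype_injective S)).symm
  have he (x) : M.toSubmodule.subtype.baseChange S (e x) =
      Φ (L.toSubmodule.subtype.baseChange S x) :=
    LinearEquiv.ofInjective_symm_apply (h := M.toSubmodule.baseChange_subtype_injective S) _ _
  { e with
    map_lie' := fun {x y} => M.toSubmodule.baseChange_subtype_injective S (by
      change M.toSubmodule.subtype.baseChange S (e _) =
        M.toSubmodule.subtype.baseChange S ⁅e x, e y⁆
      rw [M.baseChange_subtype_lie, he, he, he, L.baseChange_subtype_lie]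
      simp only [map_sub, map_mul]) }

end LieBaseChange

namespace QuadraticForm

section
variable {R A ι : Type*} [CommRing R] [CommRing A] [Algebra R A] [Invertible (2 : R)]
  [Fintype ι] [DecidableEq ι]

theorem baseChange_weightedSumSquares (w : ι → R) :
    QuadraticForm.baseChange A (weightedSumSquares R w) =
      (weightedSumSquares A (algebraMap R A ∘ w)).comp (piScalarRight R A A ι).toLinearMap := by
  ext m
  simp [piScalarRight_apply, Algebra.smul_def]

noncomputable def isometryEquivBaseChangeWeightedSumSquares (w : ι → R) :
    (QuadraticForm.baseChange A (weightedSumSquares R w)).IsometryEquiv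
      (weightedSumSquares A (algebraMap R A ∘ w)) :=
  ⟨piScalarRight R A A ι, fun m => by rw [baseChange_weightedSumSquares]; rfl⟩

end

noncomputable def isometryEquivBaseChangeSumSquares {R K ι : Type*} [Field R] [Field K]
    [IsAlgClosed K] [Algebra R K] [Invertible (2 : R)] [Fintype ι] [DecidableEq ι] (w : ι → R)
    (hw : ∀ i, w i ≠ 0) :
    (QuadraticForm.baseChange K (weightedSumSquares R w)).IsometryEquiv
      (weightedSumSquares K (1 : ι → K)) := by
  classical
  exact (isometryEquivBaseChangeWeightedSumSquares w).trans
    ((isometryEquivSumSquares _).trans (weightedSumSquaresCongr (by ext i; simp [hw i])))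

end QuadraticForm

namespace CliffordAlgebra

variable {R M₁ M₂ : Type*} [CommRing R] [AddCommGroup M₁] [AddCommGroup M₂] [Module R M₁]
  [Module R M₂] {Q₁ : QuadraticForm R M₁} {Q₂ : QuadraticForm R M₂}

theorem map_involute (f : Q₁ →qᵢ Q₂) (x : CliffordAlgebra Q₁) :
    map f (involute x) = involute (map f x) := by
  induction x using CliffordAlgebra.induction with
  | algebraMap r => simp
  | ι v => simp
  | mul a b ha hb => simp [ha, hb]
  | add a b ha hb => simp [ha, hb]

theorem map_reverse (f : Q₁ →qᵢ Q₂) (x : CliffordAlgebra Q₁) :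
    map f (reverse x) = reverse (map f x) := by
  induction x using CliffordAlgebra.induction with
  | algebraMap r => simp
  | ι v => simp
  | mul a b ha hb => simp [reverse.map_mul, ha, hb]
  | add a b ha hb => simp [ha, hb]

variable {S : Type*} [CommRing S] [Algebra R S] [Invertible (2 : R)]

theorem toBaseChange_reverse_involute (Q : QuadraticForm R M₁)
    (x : CliffordAlgebra (Q.baseChange S)) :
    toBaseChange S Q (reverse (involute x)) =
      (reverse.comp (involute (Q := Q)).toLinearMap).baseChange S (toBaseChange S Q x) := by
  rw [toBaseChange_reverse, toBaseChange_involute, baseChange_eq_ltensor, lTensor_comp_apply]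
  rfl

noncomputable def baseChangeEquivOfIsometry
    (e : (Q₁.baseChange S).IsometryEquiv (Q₂.baseChange S)) :
    S ⊗[R] CliffordAlgebra Q₁ ≃ₐ[S] S ⊗[R] CliffordAlgebra Q₂ :=
  (equivBaseChange S Q₁).symm.trans ((equivOfIsometry e).trans (equivBaseChange S Q₂))

theorem baseChangeEquivOfIsometry_reverse_involute
    (e : (Q₁.baseChange S).IsometryEquiv (Q₂.baseChange S)) (t : S ⊗[R] CliffordAlgebra Q₁) :
    baseChangeEquivOfIsometry e ((reverse.comp (involute (Q := Q₁)).toLinearMap).baseChange S t) =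
      (reverse.comp (involute (Q := Q₂)).toLinearMap).baseChange S
        (baseChangeEquivOfIsometry e t) := by
  obtain ⟨u, rfl⟩ := (equivBaseChange S Q₁).surjective t
  simp only [baseChangeEquivOfIsometry, AlgEquiv.trans_apply, equivBaseChange_apply,
    equivBaseChange_symm_apply, ofBaseChange_toBaseChange]
  rw [← toBaseChange_reverse_involute, ofBaseChange_toBaseChange, ← toBaseChange_reverse_involute]
  exact congrArg _ ((map_reverse _ _).trans (congrArg reverse (map_involute _ _)))

end CliffordAlgebra

namespace CliffPaper

attribute [local instance 100] LieRing.ofAssociativeRing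

noncomputable def isometryEquivBaseChangeQf (r s : ℕ) :
    ((Qf ℝ r s).baseChange ℂ).IsometryEquiv (weightedSumSquares ℂ (1 : Fin (r + s) → ℂ)) :=
  QuadraticForm.isometryEquivBaseChangeSumSquares _ fun i => by split_ifs <;> norm_num

theorem map_baseChange_Gsub {r s r' s' : ℕ} (Φ : ℂ ⊗[ℝ] Cl ℝ r s ≃ₐ[ℂ] ℂ ⊗[ℝ] Cl ℝ r' s')
    (hΦ : ∀ t, Φ ((conj ℝ r s).baseChange ℂ t) = (conj ℝ r' s').baseChange ℂ (Φ t)) :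
    ((Gsub ℝ r s).baseChange ℂ).map Φ.toLinearMap = (Gsub ℝ r' s').baseChange ℂ := by
  rw [Gsub, Gsub, Submodule.baseChange_ker, Submodule.baseChange_ker]
  exact Φ.toLinearEquiv.map_ker_of_comm fun t => by
    simp [baseChange_add, baseChange_id, hΦ]

open TensorProduct in
theorem statement13_general (r s : ℕ) :
    Nonempty ((ℂ ⊗[ℝ] ↥(GLie ℝ r s)) ≃ₗ⁅ℂ⁆ (ℂ ⊗[ℝ] ↥(GLie ℝ (r + s) 0))) := by
  let Φ := CliffordAlgebra.baseChangeEquivOfIsometry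
    ((isometryEquivBaseChangeQf r s).trans (isometryEquivBaseChangeQf (r + s) 0).symm)
  exact ⟨LieEquiv.ofAlgEquivBaseChange (GLie ℝ r s) (GLie ℝ (r + s) 0) Φ
    (map_baseChange_Gsub Φ (CliffordAlgebra.baseChangeEquivOfIsometry_reverse_involute _))⟩

open TensorProduct in
/-- 𝔊_{r,s} ⊗_ℝ ℂ ≅ 𝔊_{n,0} ⊗_ℝ ℂ as complex Lie algebras, n = r+s. -/
theorem statement13 (r s : ℕ) (hn : 0 < r + s) :
    Nonempty ((ℂ ⊗[ℝ] ↥(GLie ℝ r s)) ≃ₗ⁅ℂ⁆ (ℂ ⊗[ℝ] ↥(GLie ℝ (r + s) 0))) :=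
  statement13_general r s

end CliffPaper
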